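/- arXiv:1808.06037 — 2 statements merged into one kernel-verified Lean document; each statement's English description precedes it below -/
import Mathlib

section
/- If n is a positive integer with n ≡ 2 (mod 4) and m = n²+1, then the Jacobi symbol (n/m) equals -1. -/
/-!
Write `n = 2u` with `u` odd. Then `m = n² + 1 = 4u² + 1 ≡ 5 (mod 8)`, so `(2/m) = -1`; and since
`m ≡ 1 (mod 4)` and `m ≡ 1 (mod u)`, reciprocity gives `(u/m) = (m/u) = (1/u) = 1`.
-/

theorem jacobiSym_two_of_mod_eight_eq_five {b : ℕ} (hb : b % 8 = 5) : jacobiSym 2 b = -1 := by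
  rw [jacobiSym.at_two (Nat.odd_iff.mpr (by omega)), ZMod.χ₈_nat_mod_eight, hb]
  rfl

theorem jacobiSym_eq_one_of_modEq_one {a b : ℕ} (ha : Odd a) (hb : b % 4 = 1)
    (hba : b ≡ 1 [MOD a]) : jacobiSym a b = 1 := by
  rw [jacobiSym.quadratic_reciprocity_one_mod_four' ha hb,
    jacobiSym.mod_left' (Int.natCast_modEq_iff.mpr hba), Nat.cast_one, jacobiSym.one_left]

theorem jacobi_n_eq_neg_one_of_mod_four_general (n : ℕ) (h : n % 4 = 2) :
    jacobiSym (n : ℤ) (n ^ 2 + 1) = -1 := by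
  obtain ⟨k, rfl⟩ : ∃ k, n = 2 * (2 * k + 1) := ⟨n / 4, by omega⟩
  have hm_mod_eight : (2 * (2 * k + 1)) ^ 2 + 1 = 5 + 8 * (2 * k ^ 2 + 2 * k) := by ring
  have hm_mod_u : (2 * (2 * k + 1)) ^ 2 + 1 = 1 + (2 * k + 1) * (4 * (2 * k + 1)) := by ring
  have h2 : jacobiSym 2 ((2 * (2 * k + 1)) ^ 2 + 1) = -1 :=
    jacobiSym_two_of_mod_eight_eq_five (by omega)
  have hu : jacobiSym (2 * k + 1 : ℕ) ((2 * (2 * k + 1)) ^ 2 + 1) = 1 :=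
    jacobiSym_eq_one_of_modEq_one (odd_two_mul_add_one k) (by omega)
      (by rw [hm_mod_u]; exact Nat.add_mul_mod_self_left 1 _ _)
  push_cast at h2 hu ⊢
  rw [jacobiSym.mul_left, h2, hu, neg_one_mul]

theorem jacobi_n_eq_neg_one_of_mod_four (n : ℕ) (hn : 0 < n) (h : n % 4 = 2) :
    jacobiSym (n : ℤ) (n ^ 2 + 1) = -1 :=
  jacobi_n_eq_neg_one_of_mod_four_general n h
end

section
/- Let n ≥ 2 and m = n²+1. The map a ↦ n·a on the nonzero elements of ℤ/mℤ, restricted to nonzero residues, decomposes into exactly n²/4 disjoint 4-cycles when n is even. -/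
/-!
Since `n ^ 2 = -1` in `ZMod (n ^ 2 + 1)`, multiplication by `n` has fourth power the identity,
so every cycle has length dividing 4. A cycle of length 2 would give `x = n ^ 2 * x = -x`, hence
`2 * x = 0`, which forces `x = 0` because `n ^ 2 + 1` is odd. So `0` is the only fixed point and the
remaining `n ^ 2` residues split into 4-cycles.
-/

open Finset

namespace Equiv.Perm

variable {α : Type*} [Fintype α] [DecidableEq α]

theorem card_support_cycleOf_eq_four {σ : Perm α} (h4 : σ ^ 4 = 1)
    (h2 : ∀ x, σ (σ x) = x → σ x = x) {x : α} (hx : σ x ≠ x) :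
    #(σ.cycleOf x).support = 4 := by
  have hdvd : #(σ.cycleOf x).support ∣ 4 := by
    rw [← (isCycle_cycleOf σ hx).orderOf]
    exact (orderOf_cycleOf_dvd_orderOf σ x).trans (orderOf_dvd_of_pow_eq_one h4)
  have hne2 : #(σ.cycleOf x).support ≠ 2 := by
    intro hcard
    have hfix : (σ ^ 2) x = x := by
      rw [← pow_mod_card_support_cycleOf_self_apply, hcard, Nat.mod_self, pow_zero, one_apply]
    exact hx (h2 x (by rwa [sq, mul_apply] at hfix))
  have hge2 : 2 ≤ #(σ.cycleOf x).support := two_le_card_support_cycleOf_iff.mpr hx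
  have hle4 : #(σ.cycleOf x).support ≤ 4 := Nat.le_of_dvd four_pos hdvd
  interval_cases #(σ.cycleOf x).support <;> simp_all

theorem cycleType_eq_replicate_four {σ : Perm α} (h4 : σ ^ 4 = 1)
    (h2 : ∀ x, σ (σ x) = x → σ x = x) :
    σ.cycleType = Multiset.replicate (#σ.support / 4) 4 := by
  have hmem : ∀ b ∈ σ.cycleType, b = 4 := by
    rw [cycleType_def]
    rintro b hb
    obtain ⟨c, hc, rfl⟩ := Multiset.mem_map.mp hb
    obtain ⟨x, hx⟩ := (mem_cycleFactorsFinset_iff.mp hc).1.nonempty_support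
    have hσx : σ x ≠ x := mem_support.mp (mem_cycleFactorsFinset_support_le hc hx)
    rw [Function.comp_apply, cycle_is_cycleOf hx hc]
    exact card_support_cycleOf_eq_four h4 h2 hσx
  have hrep := Multiset.eq_replicate_card.mpr hmem
  have hsum : Multiset.card σ.cycleType * 4 = #σ.support := by
    rw [← sum_cycleType, hrep, Multiset.sum_replicate, smul_eq_mul, Multiset.card_replicate]
  rw [hrep, ← hsum, Nat.mul_div_cancel _ four_pos]

end Equiv.Perm

section CommRing

variable {R : Type*} [CommRing R] {a : R}

theorem eq_zero_of_sq_mul_eq_self (h2 : IsUnit (2 : R)) (ha : a ^ 2 = -1) {x : R}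
    (hx : a * (a * x) = x) : x = 0 :=
  h2.mul_right_eq_zero.mp (by linear_combination x * ha - hx)

theorem cycleType_mul_left_of_sq_eq_neg_one [Fintype R] [DecidableEq R] (h2 : IsUnit (2 : R))
    (ha : a ^ 2 = -1) (σ : Equiv.Perm R) (hσ : ∀ x, σ x = a * x) :
    σ.cycleType = Multiset.replicate ((Fintype.card R - 1) / 4) 4 := by
  have hfix : ∀ x, σ x = x ↔ x = 0 := fun x =>
    ⟨fun h => eq_zero_of_sq_mul_eq_self h2 ha (by rw [← hσ, ← hσ, h, h]),
      fun h => by rw [hσ, h, mul_zero]⟩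
  have h4 : σ ^ 4 = 1 := by
    ext x
    simp only [pow_succ, pow_zero, one_mul, Equiv.Perm.mul_apply, hσ, Equiv.Perm.one_apply]
    linear_combination (x * a ^ 2 - x) * ha
  have hsupport : σ.support = {0}ᶜ := by
    ext x
    simp [hfix]
  rw [Equiv.Perm.cycleType_eq_replicate_four h4
    (fun x hx => (hfix x).mpr (eq_zero_of_sq_mul_eq_self h2 ha (by rwa [← hσ, ← hσ]))),
    hsupport, card_compl, card_singleton]

end CommRing

theorem mul_by_n_cycleType_general (n : ℕ) (hev : Even n)
    (f : Equiv.Perm (ZMod (n ^ 2 + 1))) (hf : ∀ a, f a = (n : ZMod (n ^ 2 + 1)) * a) :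
    f.cycleType = Multiset.replicate (n ^ 2 / 4) 4 := by
  have hsq : (n : ZMod (n ^ 2 + 1)) ^ 2 = -1 := by
    have h0 : ((n ^ 2 + 1 : ℕ) : ZMod (n ^ 2 + 1)) = 0 := ZMod.natCast_self _
    push_cast at h0
    linear_combination h0
  have h2 : IsUnit (2 : ZMod (n ^ 2 + 1)) := by
    have hodd : Odd (n ^ 2 + 1) := (hev.pow_of_ne_zero two_ne_zero).add_one
    exact_mod_cast (ZMod.isUnit_iff_coprime 2 (n ^ 2 + 1)).mpr (Nat.coprime_two_left.mpr hodd)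
  rw [cycleType_mul_left_of_sq_eq_neg_one h2 hsq f hf, ZMod.card, Nat.add_sub_cancel]

theorem mul_by_n_cycleType (n : ℕ) (hn : 2 ≤ n) (hev : Even n)
    (f : Equiv.Perm (ZMod (n ^ 2 + 1))) (hf : ∀ a, f a = (n : ZMod (n ^ 2 + 1)) * a) :
    f.cycleType = Multiset.replicate (n ^ 2 / 4) 4 :=
  mul_by_n_cycleType_general n hev f hf
end
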